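/- Let (T,Σ,μ) be a complete finite measure space and E a Banach space. If {f_n} is a well-dominated sequence in L¹(μ,E) converging weakly in L¹(μ,E) to f, then f(t) ∈ co̅ w-Ls{f_n(t)} for a.e. t ∈ T, where co̅ denotes the closed convex hull. -/

import Mathlib

open MeasureTheory Filter Topology Set

noncomputable section

/-- The (strong) upper limit `Ls {F n}` of a sequence of sets in a topological space:
all points that are limits of some subsequence of points `x_{n_i} ∈ F_{n_i}`. -/
def Ls {E : Type*} [TopologicalSpace E] (F : ℕ → Set E) : Set E :=
  {x | ∃ φ : ℕ → ℕ, StrictMono φ ∧ ∃ u : ℕ → E,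
    (∀ i, u i ∈ F (φ i)) ∧ Tendsto u atTop (𝓝 x)}

/-- A multifunction is integrably bounded. -/
def IntegrablyBounded {T : Type*} [MeasurableSpace T] {E : Type*} [NormedAddCommGroup E]
    (μ : Measure T) (Γ : T → Set E) : Prop :=
  ∃ φ : T → ℝ, Integrable φ μ ∧ ∀ᵐ t ∂μ, ∀ x ∈ Γ t, ‖x‖ ≤ φ t

/-- A set in a normed space is weakly compact if it is compact in the weak topology. -/
def WeaklyCompact {E : Type*} [NormedAddCommGroup E] [NormedSpace ℝ E] (s : Set E) : Prop :=
  IsCompact (toWeakSpace ℝ E '' s)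

/-- The weak upper limit `w-Ls {F n}` of a sequence of sets in a normed space. -/
def wLs {E : Type*} [NormedAddCommGroup E] [NormedSpace ℝ E] (F : ℕ → Set E) : Set E :=
  {x | ∃ φ : ℕ → ℕ, StrictMono φ ∧ ∃ u : ℕ → E, (∀ i, u i ∈ F (φ i)) ∧
    ∀ p : E →L[ℝ] ℝ, Tendsto (fun i => p (u i)) atTop (𝓝 (p x))}

/-!
By Mazur's lemma `g` is the strong `L¹`-limit of convex combinations of ever later tails of
`(f n)`, and a subsequence of these converges a.e.; hence for a.e. `t`, `g t` lies in the closed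
convex hull of every tail of `(f n t)`. If `g t` were strictly separated from the closed convex
hull of `w-Ls {f n t}` by a functional `p` and a level `u`, then `p (f n t) ≥ u` for infinitely
many `n`, as otherwise the hull of some tail would lie in `{p ≤ u}`; since these points lie in the weakly compact set `Γ t`, a further subsequence
converges weakly (Eberlein–Šmulian), to a point of `w-Ls {f n t}` where `p ≥ u`.
-/

theorem IsCompact.isSeqCompact_of_continuous_injOn {X Y : Type*} [TopologicalSpace X]
    [TopologicalSpace Y] [T2Space Y] [FirstCountableTopology Y] {K : Set X} (hK : IsCompact K)
    {Φ : X → Y} (hΦ : Continuous Φ) (hinj : InjOn Φ K) : IsSeqCompact K := by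
  intro x hx
  have : CompactSpace K := isCompact_iff_compactSpace.mp hK
  have he : IsClosedEmbedding (K.domRestrict Φ) :=
    (hΦ.comp continuous_subtype_val).isClosedEmbedding hinj.injective
  obtain ⟨_, ⟨y, rfl⟩, φ, hφ, hlim⟩ := (isCompact_range he.continuous).isSeqCompact
    (x := fun n => K.domRestrict Φ ⟨x n, hx n⟩) fun n => mem_range_self _
  exact ⟨y, y.2, φ, hφ,
    (continuous_subtype_val.tendsto y).comp (he.isEmbedding.tendsto_nhds_iff.mpr hlim)⟩

theorem exists_countable_strongDual_separating {𝕜 E : Type*} [RCLike 𝕜] [NormedAddCommGroup E]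
    [NormedSpace 𝕜 E] {t : Set E} (ht : TopologicalSpace.IsSeparable t) :
    ∃ S : Set (StrongDual 𝕜 E), S.Countable ∧ ∀ a ∈ t, (∀ c ∈ S, c a = 0) → a = 0 := by
  obtain ⟨d, hd, htd⟩ := ht
  -- Norming functionals at the points of a dense set: `s x` cannot vanish at any `a ≠ 0`
  -- within `‖a‖ / 2` of `x`.
  choose s hs₁ hs₂ using fun x : E => exists_dual_vector'' 𝕜 x
  refine ⟨s '' d, hd.image s, fun a ha hzero => ?_⟩
  by_contra ha₀
  have ha_pos : 0 < ‖a‖ := norm_pos_iff.mpr ha₀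
  obtain ⟨x, hxd, hax⟩ := Metric.mem_closure_iff.mp (htd ha) (‖a‖ / 2) (half_pos ha_pos)
  rw [dist_eq_norm] at hax
  have hx : ‖a‖ / 2 < ‖x‖ := by linarith [norm_le_insert' a x]
  apply lt_irrefl ‖s x x‖
  calc ‖s x x‖ = ‖s x (x - a)‖ := by rw [map_sub, hzero _ (mem_image_of_mem s hxd), sub_zero]
    _ ≤ 1 * ‖x - a‖ := (s x).le_of_opNorm_le (hs₁ x) _
    _ < ‖a‖ / 2 := by rwa [one_mul, norm_sub_rev]
    _ < ‖x‖ := hx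
    _ = ‖s x x‖ := by rw [hs₂, RCLike.norm_ofReal, abs_norm]

/-- The easy half of the Eberlein–Šmulian theorem. -/
theorem WeaklyCompact.exists_subseq_weak_tendsto {E : Type*} [NormedAddCommGroup E]
    [NormedSpace ℝ E] {K : Set E} (hK : WeaklyCompact K) {x : ℕ → E} (hx : ∀ n, x n ∈ K) :
    ∃ φ : ℕ → ℕ, StrictMono φ ∧ ∃ y : E,
      ∀ p : E →L[ℝ] ℝ, Tendsto (fun i => p (x (φ i))) atTop (𝓝 (p y)) := by
  set D := (Submodule.span ℝ (range x)).topologicalClosure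
  have hxD : ∀ n, x n ∈ D := fun n =>
    Submodule.le_topologicalClosure _ (Submodule.subset_span (mem_range_self n))
  obtain ⟨S, hS, hsep⟩ := exists_countable_strongDual_separating (𝕜 := ℝ)
    (t := (D : Set E)) (countable_range x).isSeparable.span.closure
  have : Countable S := hS.to_subtype
  -- Countably many functionals separating the points of `D` make the weak topology on the
  -- weakly compact set `K ∩ D` metrizable.
  have hDweak : IsClosed (toWeakSpace ℝ E '' D) := by
    rw [← (Submodule.isClosed_topologicalClosure _).closure_eq, D.convex.toWeakSpace_closure ℝ]
    exact isClosed_closure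
  have hKD : IsCompact (toWeakSpace ℝ E '' (K ∩ D)) := by
    rw [image_inter (toWeakSpace ℝ E).injective]
    exact hK.inter_right hDweak
  let Φ : WeakSpace ℝ E → (S → ℝ) := fun w c => (topDualPairing ℝ E).flip w c
  have hΦ : Continuous Φ :=
    continuous_pi fun c => WeakBilin.eval_continuous _ (c : StrongDual ℝ E)
  have hinj : InjOn Φ (toWeakSpace ℝ E '' (K ∩ D)) := by
    rintro _ ⟨v, hv, rfl⟩ _ ⟨w, hw, rfl⟩ hvw
    refine congrArg _ (sub_eq_zero.mp (hsep _ (sub_mem hv.2 hw.2) fun c hc => ?_))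
    rw [map_sub, sub_eq_zero]
    exact congrFun hvw ⟨c, hc⟩
  obtain ⟨_, -, φ, hφ, hlim⟩ := hKD.isSeqCompact_of_continuous_injOn hΦ hinj
    (x := fun n => toWeakSpace ℝ E (x n)) fun n => mem_image_of_mem _ ⟨hx n, hxD n⟩
  exact ⟨φ, hφ, _, fun p => ((WeakBilin.eval_continuous _ p).tendsto _).comp hlim⟩

theorem mem_closure_convexHull_image_Ici_of_weak_tendsto {X : Type*} [NormedAddCommGroup X]
    [NormedSpace ℝ X] {f : ℕ → X} {g : X}
    (hweak : ∀ p : X →L[ℝ] ℝ, Tendsto (fun n => p (f n)) atTop (𝓝 (p g))) (m : ℕ) :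
    g ∈ closure (convexHull ℝ (f '' Ici m)) := by
  by_contra hg
  obtain ⟨p, u, hpu, hup⟩ := geometric_hahn_banach_closed_point
    (convex_convexHull ℝ _).closure isClosed_closure hg
  refine hup.not_ge (le_of_tendsto (hweak p) ?_)
  filter_upwards [eventually_ge_atTop m] with n hn
  exact (hpu _ (subset_closure (subset_convexHull ℝ _ ⟨n, hn, rfl⟩))).le

theorem mem_closure_convexHull_wLs {E : Type*} [NormedAddCommGroup E] [NormedSpace ℝ E]
    {K : Set E} (hK : WeaklyCompact K) {x : ℕ → E} (hx : ∀ n, x n ∈ K)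
    {z : E} (hz : ∀ m, z ∈ closure (convexHull ℝ (x '' Ici m))) :
    z ∈ closure (convexHull ℝ (wLs fun n => {x n})) := by
  by_contra hc
  obtain ⟨p, u, hpu, hup⟩ := geometric_hahn_banach_closed_point
    (convex_convexHull ℝ _).closure isClosed_closure hc
  have h_eventually : ∃ m, ∀ n ≥ m, p (x n) < u := by
    by_contra! h
    obtain ⟨φ, hφ, hφu⟩ := extraction_of_frequently_atTop (frequently_atTop.mpr h)
    obtain ⟨ψ, hψ, y, hy⟩ := hK.exists_subseq_weak_tendsto fun i => hx (φ i)
    have hy_mem : y ∈ wLs fun n => {x n} :=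
      ⟨φ ∘ ψ, hφ.comp hψ, fun i => x (φ (ψ i)), fun i => rfl, hy⟩
    exact (hpu y (subset_closure (subset_convexHull ℝ _ hy_mem))).not_ge
      (ge_of_tendsto (hy p) (Eventually.of_forall fun i => hφu (ψ i)))
  obtain ⟨m, hm⟩ := h_eventually
  have hsub : closure (convexHull ℝ (x '' Ici m)) ⊆ {w | p w ≤ u} := by
    refine closure_minimal (convexHull_min ?_ (convex_halfSpace_le p.isLinear u))
      (isClosed_le p.continuous continuous_const)
    rintro _ ⟨n, hn, rfl⟩
    exact (hm n hn).le
  exact hup.not_ge (hsub (hz m))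

theorem MeasureTheory.Lp.ae_mem_convexHull_image {T E ι : Type*} [MeasurableSpace T]
    [NormedAddCommGroup E] [NormedSpace ℝ E] {μ : Measure T} {p : ENNReal} [Fact (1 ≤ p)]
    {f : ι → Lp E p μ} {s : Set ι} {h : Lp E p μ} (hh : h ∈ convexHull ℝ (f '' s)) :
    ∀ᵐ τ ∂μ, h τ ∈ convexHull ℝ ((fun i => f i τ) '' s) := by
  refine convexHull_min
    (t := {a : Lp E p μ | ∀ᵐ τ ∂μ, a τ ∈ convexHull ℝ ((fun i => f i τ) '' s)}) ?_ ?_ hh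
  · rintro _ ⟨i, hi, rfl⟩
    rw [mem_ofPred_eq]
    exact Eventually.of_forall fun τ => subset_convexHull ℝ _ (mem_image_of_mem (f · τ) hi)
  · intro a ha b hb θ₁ θ₂ hθ₁ hθ₂ hθ
    rw [mem_ofPred_eq]
    filter_upwards [Lp.coeFn_add (θ₁ • a) (θ₂ • b), Lp.coeFn_smul θ₁ a, Lp.coeFn_smul θ₂ b,
      ha, hb] with τ hadd ha' hb' haτ hbτ
    rw [hadd, Pi.add_apply, ha', hb', Pi.smul_apply, Pi.smul_apply]
    exact convex_convexHull ℝ _ haτ hbτ hθ₁ hθ₂ hθ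

theorem exists_seq_tendsto_of_forall_mem_closure {X : Type*} [PseudoMetricSpace X]
    {A : ℕ → Set X} {g : X} (hg : ∀ m, g ∈ closure (A m)) :
    ∃ h : ℕ → X, (∀ m, h m ∈ A m) ∧ Tendsto h atTop (𝓝 g) := by
  choose h hA hdist using fun m : ℕ =>
    Metric.mem_closure_iff.mp (hg m) (1 / (m + 1)) m.one_div_pos_of_nat
  refine ⟨h, hA, tendsto_iff_dist_tendsto_zero.mpr <| squeeze_zero (fun _ => dist_nonneg)
    (fun m => ?_) tendsto_one_div_add_atTop_nhds_zero_nat⟩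
  rw [dist_comm]
  exact (hdist m).le

theorem weak_L1_limit_mem_closedConvexHull_wLs_general {T : Type*} [MeasurableSpace T]
    {E : Type*} [NormedAddCommGroup E] [NormedSpace ℝ E]
    (μ : Measure T)
    (f : ℕ → Lp E 1 μ) (g : Lp E 1 μ)
    (hwd : ∃ Γ : T → Set E, IntegrablyBounded μ Γ ∧ (∀ t, (Γ t).Nonempty) ∧
      (∀ t, WeaklyCompact (Γ t)) ∧ ∀ n, ∀ᵐ t ∂μ, (f n : T → E) t ∈ Γ t)
    (hweak : ∀ p : Lp E 1 μ →L[ℝ] ℝ,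
      Tendsto (fun n => p (f n)) atTop (𝓝 (p g))) :
    ∀ᵐ t ∂μ, (g : T → E) t ∈
      closure (convexHull ℝ (wLs (fun n => {(f n : T → E) t}))) := by
  obtain ⟨Γ, -, -, hΓ_compact, hfΓ⟩ := hwd
  obtain ⟨h, h_hull, h_tendsto⟩ := exists_seq_tendsto_of_forall_mem_closure
    (mem_closure_convexHull_image_Ici_of_weak_tendsto hweak)
  obtain ⟨ns, hns, h_ae⟩ := (tendstoInMeasure_of_tendsto_Lp h_tendsto).exists_seq_tendsto_ae
  filter_upwards [ae_all_iff.mpr hfΓ,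
    ae_all_iff.mpr fun m => Lp.ae_mem_convexHull_image (h_hull m), h_ae]
    with t hft h_hull_t h_lim
  refine mem_closure_convexHull_wLs (hΓ_compact t) hft fun m => mem_closure_of_tendsto h_lim ?_
  filter_upwards [eventually_ge_atTop m] with j hj
  exact convexHull_mono (image_mono (Ici_subset_Ici.mpr (hj.trans hns.le_apply)))
    (h_hull_t (ns j))

/-- **Khan–Majumdar lemma.** If a well-dominated sequence in `L¹(μ, E)` converges weakly
in `L¹(μ, E)` to `g`, then a.e. `g t` lies in the closed convex hull of the weak upper
limit `w-Ls {f n t}`. -/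
theorem weak_L1_limit_mem_closedConvexHull_wLs {T : Type*} [MeasurableSpace T]
    {E : Type*} [NormedAddCommGroup E] [NormedSpace ℝ E] [CompleteSpace E]
    (μ : Measure T) [IsFiniteMeasure μ] (hcomp : μ.IsComplete)
    (f : ℕ → Lp E 1 μ) (g : Lp E 1 μ)
    (hwd : ∃ Γ : T → Set E, IntegrablyBounded μ Γ ∧ (∀ t, (Γ t).Nonempty) ∧
      (∀ t, WeaklyCompact (Γ t)) ∧ ∀ n, ∀ᵐ t ∂μ, (f n : T → E) t ∈ Γ t)
    (hweak : ∀ p : Lp E 1 μ →L[ℝ] ℝ,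
      Tendsto (fun n => p (f n)) atTop (𝓝 (p g))) :
    ∀ᵐ t ∂μ, (g : T → E) t ∈
      closure (convexHull ℝ (wLs (fun n => {(f n : T → E) t}))) :=
  weak_L1_limit_mem_closedConvexHull_wLs_general μ f g hwd hweak

end
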